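/- arXiv:2405.08105 — 6 statements merged into one kernel-verified Lean document; each statement's English description precedes it below -/
import Mathlib

section
/- Let A be a unital C*-algebra and let τ : A → ℂ be a linear functional that is a trace (τ(a·b) = τ(b·a) for all a, b ∈ A), positive (τ(a) is a nonnegative real number for every positive element a of A, i.e., every a with 0 ≤ a), and faithful (if 0 ≤ a and τ(a) = 0 then a = 0). Then for every idempotent e ∈ A (e·e = e), the value τ(e) is a real number satisfying 0 ≤ τ(e) ≤ τ(1); moreover, τ(e) = 0 if and only if e = 0. -/
open scoped ComplexOrder

/-!
A trace takes the same value on an idempotent `e` and on any projection `p` with `e p = p` and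
`p e = e`, because `τ e = τ (p e) = τ (e p) = τ p`. In a C*-algebra such a projection is
`p = e e* h⁻¹` with `h = 1 + (e - e*)* (e - e*)`: `h` is self-adjoint, satisfies
`e h = h e = e e* e`, and is invertible since `(e - e*)* (e - e*)` has nonnegative spectrum.
Positivity and faithfulness at `p = p* p` give `0 ≤ τ e` and `τ e = 0 → e = 0`; the same applied
to the idempotent `1 - e` gives `τ e ≤ τ 1`.
-/

section IdempotentToProjection

variable {A : Type*} [Ring A] [StarRing A] {e : A}

lemma mul_one_add_star_mul_self_sub_star_of_isIdempotentElem (he : IsIdempotentElem e) :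
    e * (1 + star (e - star e) * (e - star e)) = e * star e * e := by
  have hs : star e * star e = star e := he.star
  simp only [star_sub, star_star, mul_add, mul_sub, sub_mul, mul_one, ← mul_assoc, he.eq, hs]
  abel

lemma one_add_star_mul_self_sub_star_mul_of_isIdempotentElem (he : IsIdempotentElem e) :
    (1 + star (e - star e) * (e - star e)) * e = e * star e * e := by
  have hs : star e * star e = star e := he.star
  simp only [star_sub, star_star, add_mul, mul_sub, sub_mul, one_mul, mul_assoc, he.eq, hs]
  abel

theorem exists_isStarProjection_of_isIdempotentElem (he : IsIdempotentElem e)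
    (hunit : IsUnit (1 + star (e - star e) * (e - star e))) :
    ∃ p : A, IsStarProjection p ∧ e * p = p ∧ p * e = e := by
  obtain ⟨u, hu⟩ := hunit
  have hu_sa : IsSelfAdjoint (u : A) := hu ▸ .add (.one A) (.star_mul_self _)
  have he_u : e * u = e * star e * e :=
    hu ▸ mul_one_add_star_mul_self_sub_star_of_isIdempotentElem he
  have hu_e : Commute (u : A) e :=
    (hu ▸ one_add_star_mul_self_sub_star_mul_of_isIdempotentElem he).trans he_u.symm
  have hv_e : Commute (↑u⁻¹ : A) e := hu_e.units_inv_left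
  have hv_se : Commute (↑u⁻¹ : A) (star e) :=
    (hu_sa.star_eq ▸ hu_e.star_star).units_inv_left
  have hv_sa : IsSelfAdjoint (↑u⁻¹ : A) := Ring.inverse_unit u ▸ hu_sa.ringInverse
  have hpe : e * star e * ↑u⁻¹ * e = e := by
    rw [mul_assoc, hv_e.eq, ← mul_assoc, ← he_u, mul_assoc, u.mul_inv, mul_one]
  refine ⟨e * star e * ↑u⁻¹, ⟨?_, ?_⟩, by rw [← mul_assoc, ← mul_assoc, he.eq], hpe⟩
  · rw [IsIdempotentElem, ← mul_assoc, ← mul_assoc, hpe]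
  · rw [IsSelfAdjoint, star_mul, star_mul, hv_sa.star_eq, star_star, ← mul_assoc,
      hv_e.eq, mul_assoc, hv_se.eq, mul_assoc]

end IdempotentToProjection

lemma isUnit_one_add_star_mul_self {A : Type*} [CStarAlgebra A] (d : A) :
    IsUnit (1 + star d * d) := by
  have h : (-1 : ℝ) ∉ spectrum ℝ (star d * d) := fun h ↦ by
    linarith [spectrum_star_mul_self_nonneg _ h]
  rw [spectrum.notMem_iff, map_neg, map_one, ← neg_add'] at h
  exact IsUnit.neg_iff _ |>.mp h

theorem CStarAlgebra.exists_isStarProjection_of_isIdempotentElem {A : Type*} [CStarAlgebra A]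
    {e : A} (he : IsIdempotentElem e) : ∃ p : A, IsStarProjection p ∧ e * p = p ∧ p * e = e :=
  _root_.exists_isStarProjection_of_isIdempotentElem he (isUnit_one_add_star_mul_self _)

theorem trace_eq_of_mul_eq_of_mul_eq {A M : Type*} [Mul A] (τ : A → M)
    (htrace : ∀ a b : A, τ (a * b) = τ (b * a)) {e p : A} (hep : e * p = p) (hpe : p * e = e) :
    τ e = τ p :=
  calc τ e = τ (p * e) := by rw [hpe]
    _ = τ (e * p) := htrace p e
    _ = τ p := by rw [hep]

/-- **(Burger–Valette).** If `τ` is a positive faithful trace on a unital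
C*-algebra `A` (positivity/faithfulness stated for elements of the form
`star b * b`, which are exactly the positive elements), then for every
idempotent `e` one has `0 ≤ τ e ≤ τ 1` (in particular `τ e` is a nonnegative
real number), and `τ e = 0` iff `e = 0`. -/
theorem trace_idempotent_nonneg_le_trace_one
    {A : Type*} [NormedRing A] [StarRing A] [CStarRing A]
    [NormedAlgebra ℂ A] [StarModule ℂ A] [CompleteSpace A]
    (τ : A →ₗ[ℂ] ℂ)
    (htrace : ∀ a b : A, τ (a * b) = τ (b * a))
    (hpos : ∀ a : A, (∃ b : A, a = star b * b) → 0 ≤ τ a)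
    (hfaithful : ∀ a : A, (∃ b : A, a = star b * b) → τ a = 0 → a = 0)
    (e : A) (he : e * e = e) :
    0 ≤ τ e ∧ τ e ≤ τ 1 ∧ (τ e = 0 ↔ e = 0) := by
  let _ : CStarAlgebra A := {}
  have key : ∀ f : A, IsIdempotentElem f → 0 ≤ τ f ∧ (τ f = 0 → f = 0) := by
    intro f hf
    obtain ⟨p, hp, hfp, hpf⟩ := CStarAlgebra.exists_isStarProjection_of_isIdempotentElem hf
    have hτ : τ f = τ p := trace_eq_of_mul_eq_of_mul_eq τ htrace hfp hpf
    have hp_eq : p = star p * p := by rw [hp.isSelfAdjoint.star_eq, hp.isIdempotentElem.eq]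
    refine ⟨hτ ▸ hpos p ⟨p, hp_eq⟩, fun hτf ↦ ?_⟩
    rw [← hpf, hfaithful p ⟨p, hp_eq⟩ (hτ ▸ hτf), zero_mul]
  obtain ⟨he_nonneg, he_faithful⟩ := key e he
  obtain ⟨hone_sub_nonneg, -⟩ := key (1 - e) (IsIdempotentElem.one_sub he)
  rw [map_sub, sub_nonneg] at hone_sub_nonneg
  exact ⟨he_nonneg, hone_sub_nonneg, he_faithful, fun h ↦ by rw [h, map_zero]⟩
end

section
/- Let G be a t.d.l.c. group, μ a left Haar measure on G, and O a compact open subgroup with μ(O) = 1. Let M = C_c(G,ℂ)^O be the ℂ[G]-module of locally constant compactly supported functions β : G → ℂ with β(xω) = β(x) for all x ∈ G, ω ∈ O, with G acting by (g·β)(x) = β(g⁻¹x). Let H(G,O) be the set of locally constant compactly supported functions f : G → ℂ that are bi-O-invariant, i.e., f(ω₁xω₂) = f(x) for all x ∈ G, ω₁, ω₂ ∈ O. For f ∈ H(G,O) define φ(f) : M → M by φ(f)(β) = β ∗ f, where (β ∗ f)(x) = ∫_G β(ω)·f(ω⁻¹x) dμ(ω). Then: (i) for every f ∈ H(G,O),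 φ(f) is a well-defined ℂ-linear G-equivariant endomorphism of M; (ii) φ(f ∗ h) = φ(h) ∘ φ(f) for all f, h ∈ H(G,O) (φ is anti-multiplicative); and (iii) φ is a bijection from H(G,O) onto the set of ℂ-linear G-equivariant endomorphisms of M. -/
open MeasureTheory

section HeckeAction

variable {G : Type*} [Group G] [TopologicalSpace G]

/-- Convolution of two functions `G → ℂ` with respect to the measure `μ`:
`(β ∗ f)(x) = ∫ β(ω) f(ω⁻¹x) dμ(ω)`. -/
noncomputable def hConv [MeasurableSpace G] (μ : Measure G) (β f : G → ℂ) :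
    G → ℂ :=
  fun x => ∫ ω, β ω * f (ω⁻¹ * x) ∂μ

/-- Membership in `C_c(G,ℂ)^O`: locally constant, compactly supported,
right `O`-invariant. -/
def IsCcRInv (O : Subgroup G) (β : G → ℂ) : Prop :=
  IsLocallyConstant β ∧ HasCompactSupport β ∧
    ∀ x : G, ∀ ω ∈ O, β (x * ω) = β x

/-- Membership in the Hecke algebra `H(G,O)`: locally constant, compactly
supported, bi-`O`-invariant. -/
def IsHeckeFun (O : Subgroup G) (f : G → ℂ) : Prop :=
  IsLocallyConstant f ∧ HasCompactSupport f ∧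
    ∀ x : G, ∀ ω₁ ∈ O, ∀ ω₂ ∈ O, f (ω₁ * x * ω₂) = f x

end HeckeAction

/-!
Every `β ∈ C_c(G,ℂ)^O` is a finite combination `∑ β(t) • 1_{tO}` of left translates of `1_O`,
because its compact support meets only finitely many cosets of the open subgroup `O`. Since
`μ(O) = 1`, `1_O ∗ f = f` for every left `O`-invariant `f`, and left invariance of `μ` makes
`β ↦ β ∗ f` commute with left translations; hence `β ∗ f = ∑ β(t) • (t · f)`. This expansion gives
stability of `C_c(G,ℂ)^O` and anti-multiplicativity, `f` is recovered as `1_O ∗ f`, and an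
equivariant `Φ` agrees with convolution by `Φ(1_O)` on each `1_{tO}`, hence everywhere.
-/

section Invariants

variable {G : Type*} [Group G] {O : Subgroup G}

def leftTranslate (g : G) (β : G → ℂ) : G → ℂ := fun x => β (g⁻¹ * x)

lemma leftTranslate_eq_self {β : G → ℂ} (hβ : ∀ x, ∀ ω ∈ O, β (ω * x) = β x) {g : G}
    (hg : g ∈ O) : leftTranslate g β = β :=
  funext fun x => hβ x g⁻¹ (O.inv_mem hg)

lemma indicator_one_mul_eq {f : G → ℂ} (hf : ∀ x, ∀ ω ∈ O, f (ω * x) = f x) (x ω : G) :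
    (O : Set G).indicator 1 ω * f (ω⁻¹ * x) = (O : Set G).indicator (fun _ => f x) ω := by
  by_cases hω : ω ∈ O
  · simp [hω, hf x ω⁻¹ (O.inv_mem hω)]
  · simp [hω]

variable [TopologicalSpace G]

def ccRInvSubmodule (O : Subgroup G) : Submodule ℂ (G → ℂ) where
  carrier := {β | IsCcRInv O β}
  add_mem' hβ hγ := ⟨hβ.1.add hγ.1, hβ.2.1.add hγ.2.1, fun x ω hω => by
    simp only [Pi.add_apply, hβ.2.2 x ω hω, hγ.2.2 x ω hω]⟩
  zero_mem' := ⟨IsLocallyConstant.const 0, HasCompactSupport.zero, fun _ _ _ => rfl⟩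
  smul_mem' c _ hβ := ⟨hβ.1.comp (c • ·), hβ.2.1.smul_left (f := fun _ => c), fun x ω hω => by
    simp only [Pi.smul_apply, hβ.2.2 x ω hω]⟩

lemma IsHeckeFun.mul_left_eq {f : G → ℂ} (hf : IsHeckeFun O f) :
    ∀ x, ∀ ω ∈ O, f (ω * x) = f x := fun x ω hω => by
  simpa using hf.2.2 x ω hω 1 O.one_mem

lemma IsHeckeFun.isCcRInv {f : G → ℂ} (hf : IsHeckeFun O f) : IsCcRInv O f :=
  ⟨hf.1, hf.2.1, fun x ω hω => by simpa using hf.2.2 x 1 O.one_mem ω hω⟩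

variable [IsTopologicalGroup G]

lemma IsCcRInv.leftTranslate {β : G → ℂ} (hβ : IsCcRInv O β) (g : G) :
    IsCcRInv O (leftTranslate g β) :=
  ⟨hβ.1.comp_continuous (continuous_const_mul g⁻¹),
    hβ.2.1.comp_homeomorph (Homeomorph.mulLeft g⁻¹),
    fun x ω hω => by
      show β (g⁻¹ * (x * ω)) = β (g⁻¹ * x)
      rw [← mul_assoc]
      exact hβ.2.2 _ ω hω⟩

lemma isCcRInv_indicator_one (hOc : IsCompact (O : Set G)) (hOo : IsOpen (O : Set G)) :
    IsCcRInv O ((O : Set G).indicator 1) :=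
  ⟨(LocallyConstant.indicator 1 ⟨O.isClosed_of_isOpen hOo, hOo⟩).isLocallyConstant,
    HasCompactSupport.intro hOc fun _ hx => Set.indicator_of_notMem hx _,
    fun x ω hω => by by_cases hx : x ∈ O <;> simp [hx, O.mul_mem_cancel_right hω]⟩

/-- Only finitely many cosets `tO` meet the support of `β`, since `G ⧸ O` is discrete. -/
lemma exists_finset_eq_sum_leftTranslate (hOo : IsOpen (O : Set G)) {β : G → ℂ}
    (hβc : HasCompactSupport β) (hβO : ∀ x, ∀ ω ∈ O, β (x * ω) = β x) :
    ∃ T : Finset G, β = ∑ t ∈ T, β t • leftTranslate t ((O : Set G).indicator 1) := by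
  classical
  have := QuotientGroup.discreteTopology hOo
  have hS := (hβc.image (QuotientGroup.continuous_mk (N := O))).finite_of_discrete
  refine ⟨hS.toFinset.image Quotient.out, funext fun x => ?_⟩
  have hcoset (q : G ⧸ O) :
      (O : Set G).indicator (1 : G → ℂ) (q.out⁻¹ * x) = if q = x then 1 else 0 := by
    simp only [Set.indicator_apply, SetLike.mem_coe, ← QuotientGroup.eq, QuotientGroup.out_eq',
      Pi.one_apply]
  rw [Finset.sum_image fun p _ q _ h => Quotient.out_injective h]
  simp only [Finset.sum_apply, Pi.smul_apply, smul_eq_mul, leftTranslate, hcoset, mul_ite,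
    mul_one, mul_zero, Finset.sum_ite_eq']
  split_ifs with hx
  · obtain ⟨ω, hω⟩ := QuotientGroup.mk_out_eq_mul O x
    rw [hω, hβO x ω ω.2]
  · exact image_eq_zero_of_notMem_tsupport fun hxs => hx (hS.mem_toFinset.2 ⟨x, hxs, rfl⟩)

end Invariants

section Convolution

variable {G : Type*} [Group G] [MeasurableSpace G] (μ : Measure G) {O : Subgroup G}

lemma hConv_smul (c : ℂ) (β f : G → ℂ) : hConv μ (c • β) f = c • hConv μ β f := by
  funext x
  simp only [hConv, Pi.smul_apply, smul_eq_mul, mul_assoc, integral_const_mul]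

lemma hConv_add {β γ f : G → ℂ} (hβ : ∀ x, Integrable (fun ω => β ω * f (ω⁻¹ * x)) μ)
    (hγ : ∀ x, Integrable (fun ω => γ ω * f (ω⁻¹ * x)) μ) :
    hConv μ (β + γ) f = hConv μ β f + hConv μ γ f := by
  funext x
  simp only [hConv, Pi.add_apply, add_mul, integral_add (hβ x) (hγ x)]

lemma hConv_sum_smul {ι : Type*} (s : Finset ι) (c : ι → ℂ) {β : ι → G → ℂ} {f : G → ℂ}
    (hβ : ∀ i ∈ s, ∀ x, Integrable (fun ω => β i ω * f (ω⁻¹ * x)) μ) :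
    hConv μ (∑ i ∈ s, c i • β i) f = ∑ i ∈ s, c i • hConv μ (β i) f := by
  funext x
  simp only [hConv, Finset.sum_apply, Pi.smul_apply, smul_eq_mul, Finset.sum_mul, mul_assoc]
  rw [integral_finsetSum s fun i hi => (hβ i hi x).const_mul (c i)]
  simp only [integral_const_mul]

lemma hConv_indicator_one (hOm : MeasurableSet (O : Set G)) (hμO : μ O = 1) {f : G → ℂ}
    (hf : ∀ x, ∀ ω ∈ O, f (ω * x) = f x) : hConv μ ((O : Set G).indicator 1) f = f := by
  funext x
  simp [hConv, indicator_one_mul_eq hf, integral_indicator_const _ hOm, measureReal_def, hμO]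

lemma integrable_mul_comp_inv_mul [TopologicalSpace G] [IsTopologicalGroup G] [BorelSpace G]
    [IsFiniteMeasureOnCompacts μ] {β f : G → ℂ} (hβ : Continuous β) (hβs : HasCompactSupport β)
    (hf : Continuous f) (x : G) : Integrable (fun ω => β ω * f (ω⁻¹ * x)) μ :=
  (hβ.mul (hf.comp (continuous_inv.mul continuous_const))).integrable_of_hasCompactSupport
    hβs.mul_right

variable [MeasurableMul G] [μ.IsMulLeftInvariant]

lemma hConv_leftTranslate (g : G) (β f : G → ℂ) :
    hConv μ (leftTranslate g β) f = leftTranslate g (hConv μ β f) := by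
  funext x
  rw [hConv, ← integral_mul_left_eq_self _ g]
  simp only [leftTranslate, hConv, inv_mul_cancel_left, mul_inv_rev, mul_assoc]

lemma hConv_mul_left_eq {f : G → ℂ} (hf : ∀ x, ∀ ω ∈ O, f (ω * x) = f x) (h : G → ℂ) :
    ∀ x, ∀ ω ∈ O, hConv μ f h (ω * x) = hConv μ f h x := fun x ω hω => by
  simpa [leftTranslate, leftTranslate_eq_self hf (O.inv_mem hω)] using
    (congrFun (hConv_leftTranslate μ ω⁻¹ f h) x).symm

lemma integrable_leftTranslate_indicator_one_mul (hOm : MeasurableSet (O : Set G))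
    (hμO : μ O ≠ ⊤) {f : G → ℂ} (hf : ∀ x, ∀ ω ∈ O, f (ω * x) = f x) (t x : G) :
    Integrable (fun ω => leftTranslate t ((O : Set G).indicator 1) ω * f (ω⁻¹ * x)) μ := by
  have hO : Integrable (fun ω => (O : Set G).indicator 1 ω * f (ω⁻¹ * (t⁻¹ * x))) μ := by
    simp only [indicator_one_mul_eq hf]
    exact (integrable_indicator_iff hOm).2 (integrableOn_const hμO)
  simpa [leftTranslate, mul_assoc] using hO.comp_mul_left t⁻¹

lemma hConv_sum_smul_leftTranslate_indicator_one (hOm : MeasurableSet (O : Set G))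
    (hμO : μ O = 1) {f : G → ℂ} (hf : ∀ x, ∀ ω ∈ O, f (ω * x) = f x) (T : Finset G)
    (c : G → ℂ) :
    hConv μ (∑ t ∈ T, c t • leftTranslate t ((O : Set G).indicator 1)) f =
      ∑ t ∈ T, c t • leftTranslate t f := by
  rw [hConv_sum_smul μ T c fun t _ =>
    integrable_leftTranslate_indicator_one_mul μ hOm (by simp [hμO]) hf t]
  simp only [hConv_leftTranslate, hConv_indicator_one μ hOm hμO hf]

end Convolution

section HeckeAlgebra

variable {G : Type*} [Group G] [TopologicalSpace G] [IsTopologicalGroup G] [MeasurableSpace G]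
  [BorelSpace G] {μ : Measure G} {O : Subgroup G}

lemma eq_of_forall_hConv_eq (hOc : IsCompact (O : Set G)) (hOo : IsOpen (O : Set G)) (hμO : μ O = 1)
    {f₁ f₂ : G → ℂ} (hf₁ : IsHeckeFun O f₁) (hf₂ : IsHeckeFun O f₂)
    (h : ∀ β, IsCcRInv O β → hConv μ β f₁ = hConv μ β f₂) : f₁ = f₂ := by
  have he := h _ (isCcRInv_indicator_one hOc hOo)
  rwa [hConv_indicator_one μ hOo.measurableSet hμO hf₁.mul_left_eq,
    hConv_indicator_one μ hOo.measurableSet hμO hf₂.mul_left_eq] at he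

variable [μ.IsHaarMeasure]

lemma isCcRInv_hConv (hOo : IsOpen (O : Set G)) (hμO : μ O = 1) {β f : G → ℂ}
    (hβ : IsCcRInv O β) (hf : IsHeckeFun O f) : IsCcRInv O (hConv μ β f) := by
  obtain ⟨T, hT⟩ := exists_finset_eq_sum_leftTranslate hOo hβ.2.1 hβ.2.2
  rw [hT, hConv_sum_smul_leftTranslate_indicator_one μ hOo.measurableSet hμO hf.mul_left_eq]
  exact Submodule.sum_mem (ccRInvSubmodule O) fun t _ =>
    Submodule.smul_mem _ _ (hf.isCcRInv.leftTranslate t)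

/-- Expanding `β` over cosets reduces both sides to `∑ β t • leftTranslate t (f ∗ h)`. -/
lemma hConv_assoc (hOo : IsOpen (O : Set G)) (hμO : μ O = 1) {β f h : G → ℂ}
    (hβ : IsCcRInv O β) (hf : IsHeckeFun O f) (hh : IsHeckeFun O h) :
    hConv μ β (hConv μ f h) = hConv μ (hConv μ β f) h := by
  obtain ⟨T, hT⟩ := exists_finset_eq_sum_leftTranslate hOo hβ.2.1 hβ.2.2
  have hOm := hOo.measurableSet
  have hft (t : G) := hf.isCcRInv.leftTranslate t
  rw [hT,
    hConv_sum_smul_leftTranslate_indicator_one μ hOm hμO (hConv_mul_left_eq μ hf.mul_left_eq h),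
    hConv_sum_smul_leftTranslate_indicator_one μ hOm hμO hf.mul_left_eq,
    hConv_sum_smul μ T _ fun t _ =>
      integrable_mul_comp_inv_mul μ (hft t).1.continuous (hft t).2.1 hh.1.continuous]
  simp only [hConv_leftTranslate]

/-- The preimage of an equivariant `Φ` is `Φ` applied to the indicator of `O`. -/
lemma exists_isHeckeFun_hConv_eq (hOc : IsCompact (O : Set G)) (hOo : IsOpen (O : Set G))
    (hμO : μ O = 1) (Φ : ccRInvSubmodule O →ₗ[ℂ] ccRInvSubmodule O)
    (hΦ : ∀ (g : G) (β γ : ccRInvSubmodule O), (γ : G → ℂ) = leftTranslate g β →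
      (Φ γ : G → ℂ) = leftTranslate g (Φ β)) :
    ∃ f, IsHeckeFun O f ∧ ∀ β : ccRInvSubmodule O, (Φ β : G → ℂ) = hConv μ β f := by
  set e : ccRInvSubmodule O := ⟨_, isCcRInv_indicator_one hOc hOo⟩
  have he_left : ∀ x, ∀ ω ∈ O, (e : G → ℂ) (ω * x) = (e : G → ℂ) x := fun x ω hω => by
    by_cases hx : x ∈ O <;> simp [e, hx, O.mul_mem_cancel_left hω]
  have hf : IsCcRInv O (Φ e) := (Φ e).2
  have hf_left : ∀ x, ∀ ω ∈ O, (Φ e : G → ℂ) (ω * x) = (Φ e : G → ℂ) x := fun x ω hω => by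
    simpa [leftTranslate] using
      (congrFun (hΦ ω⁻¹ e e (leftTranslate_eq_self he_left (O.inv_mem hω)).symm) x).symm
  refine ⟨Φ e, ⟨hf.1, hf.2.1, fun x ω₁ h₁ ω₂ h₂ => by rw [hf.2.2 _ ω₂ h₂, hf_left x ω₁ h₁]⟩,
    fun β => ?_⟩
  obtain ⟨T, hT⟩ := exists_finset_eq_sum_leftTranslate hOo β.2.2.1 β.2.2.2
  let eₜ (t : G) : ccRInvSubmodule O := ⟨leftTranslate t e, e.2.leftTranslate t⟩
  have hβ : β = ∑ t ∈ T, (β : G → ℂ) t • eₜ t := Subtype.ext (by simpa [eₜ] using hT)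
  have hΦeₜ (t : G) : (Φ (eₜ t) : G → ℂ) = leftTranslate t (Φ e) := hΦ t e (eₜ t) rfl
  calc (Φ β : G → ℂ) = ∑ t ∈ T, (β : G → ℂ) t • leftTranslate t (Φ e) := by
        conv_lhs => rw [hβ]
        simp [hΦeₜ]
    _ = hConv μ β (Φ e) := by
        conv_rhs => rw [hT]
        rw [hConv_sum_smul_leftTranslate_indicator_one μ hOo.measurableSet hμO hf_left]

end HeckeAlgebra

theorem hecke_algebra_is_opposite_endomorphism_algebra_general
    {G : Type*} [Group G] [TopologicalSpace G] [IsTopologicalGroup G]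
    [MeasurableSpace G] [BorelSpace G]
    (μ : Measure G) [μ.IsHaarMeasure]
    (O : Subgroup G) (hOc : IsCompact (O : Set G)) (hOo : IsOpen (O : Set G))
    (hμO : μ (O : Set G) = 1)
    -- `M = C_c(G,ℂ)^O` as a `ℂ`-submodule of `G → ℂ`
    (M : Submodule ℂ (G → ℂ)) (hM : ∀ β : G → ℂ, β ∈ M ↔ IsCcRInv O β) :
    -- (i) `φ(f)` is a well-defined, `ℂ`-linear, `G`-equivariant map `M → M`
    ((∀ f, IsHeckeFun O f → ∀ β, IsCcRInv O β → IsCcRInv O (hConv μ β f)) ∧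
     (∀ f, IsHeckeFun O f → ∀ β γ, IsCcRInv O β → IsCcRInv O γ →
        hConv μ (β + γ) f = hConv μ β f + hConv μ γ f) ∧
     (∀ f, IsHeckeFun O f → ∀ (c : ℂ) (β), IsCcRInv O β →
        hConv μ (c • β) f = c • hConv μ β f) ∧
     (∀ f, IsHeckeFun O f → ∀ β, IsCcRInv O β → ∀ g z : G,
        hConv μ (fun x => β (g⁻¹ * x)) f z = hConv μ β f (g⁻¹ * z))) ∧
    -- (ii) `φ` is anti-multiplicative: `φ(f ∗ h) = φ(h) ∘ φ(f)`
    (∀ f h, IsHeckeFun O f → IsHeckeFun O h → ∀ β, IsCcRInv O β →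
        hConv μ β (hConv μ f h) = hConv μ (hConv μ β f) h) ∧
    -- (iii) `φ` is injective …
    (∀ f₁ f₂, IsHeckeFun O f₁ → IsHeckeFun O f₂ →
        (∀ β, IsCcRInv O β → hConv μ β f₁ = hConv μ β f₂) → f₁ = f₂) ∧
    -- … and surjective onto the `G`-equivariant `ℂ`-linear endomorphisms of `M`
    (∀ Φ : M →ₗ[ℂ] M,
        (∀ (g : G) (β γ : M), ((γ : G → ℂ) = fun x => (β : G → ℂ) (g⁻¹ * x)) →
          ((Φ γ : G → ℂ) = fun x => (Φ β : G → ℂ) (g⁻¹ * x))) →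
        ∃ f, IsHeckeFun O f ∧ ∀ β : M, ((Φ β : G → ℂ) = hConv μ (β : G → ℂ) f)) := by
  obtain rfl : M = ccRInvSubmodule O := SetLike.ext hM
  refine ⟨⟨fun f hf β hβ => isCcRInv_hConv hOo hμO hβ hf, ?_,
      fun f _ c β _ => hConv_smul μ c β f,
      fun f _ β _ g z => congrFun (hConv_leftTranslate μ g β f) z⟩,
    fun f h hf hh β hβ => hConv_assoc hOo hμO hβ hf hh,
    fun f₁ f₂ => eq_of_forall_hConv_eq hOc hOo hμO,
    exists_isHeckeFun_hConv_eq hOc hOo hμO⟩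
  intro f hf β γ hβ hγ
  exact hConv_add μ (integrable_mul_comp_inv_mul μ hβ.1.continuous hβ.2.1 hf.1.continuous)
    (integrable_mul_comp_inv_mul μ hγ.1.continuous hγ.2.1 hf.1.continuous)

/-- Convolution on the right by elements of the Hecke algebra `H(G,O)` gives
(i) well-defined `ℂ`-linear `G`-equivariant endomorphisms `φ(f) : β ↦ β ∗ f`
of `M = C_c(G,ℂ)^O`, (ii) `φ(f ∗ h) = φ(h) ∘ φ(f)` (anti-multiplicativity),
and (iii) `φ` is a bijection from `H(G,O)` onto the `ℂ`-linear `G`-equivariant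
endomorphisms of `M`. -/
theorem hecke_algebra_is_opposite_endomorphism_algebra
    {G : Type*} [Group G] [TopologicalSpace G] [IsTopologicalGroup G]
    [LocallyCompactSpace G] [TotallyDisconnectedSpace G] [T2Space G]
    [MeasurableSpace G] [BorelSpace G]
    (μ : Measure G) [μ.IsHaarMeasure]
    (O : Subgroup G) (hOc : IsCompact (O : Set G)) (hOo : IsOpen (O : Set G))
    (hμO : μ (O : Set G) = 1)
    -- `M = C_c(G,ℂ)^O` as a `ℂ`-submodule of `G → ℂ`
    (M : Submodule ℂ (G → ℂ)) (hM : ∀ β : G → ℂ, β ∈ M ↔ IsCcRInv O β) :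
    -- (i) `φ(f)` is a well-defined, `ℂ`-linear, `G`-equivariant map `M → M`
    ((∀ f, IsHeckeFun O f → ∀ β, IsCcRInv O β → IsCcRInv O (hConv μ β f)) ∧
     (∀ f, IsHeckeFun O f → ∀ β γ, IsCcRInv O β → IsCcRInv O γ →
        hConv μ (β + γ) f = hConv μ β f + hConv μ γ f) ∧
     (∀ f, IsHeckeFun O f → ∀ (c : ℂ) (β), IsCcRInv O β →
        hConv μ (c • β) f = c • hConv μ β f) ∧
     (∀ f, IsHeckeFun O f → ∀ β, IsCcRInv O β → ∀ g z : G,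
        hConv μ (fun x => β (g⁻¹ * x)) f z = hConv μ β f (g⁻¹ * z))) ∧
    -- (ii) `φ` is anti-multiplicative: `φ(f ∗ h) = φ(h) ∘ φ(f)`
    (∀ f h, IsHeckeFun O f → IsHeckeFun O h → ∀ β, IsCcRInv O β →
        hConv μ β (hConv μ f h) = hConv μ (hConv μ β f) h) ∧
    -- (iii) `φ` is injective …
    (∀ f₁ f₂, IsHeckeFun O f₁ → IsHeckeFun O f₂ →
        (∀ β, IsCcRInv O β → hConv μ β f₁ = hConv μ β f₂) → f₁ = f₂) ∧
    -- … and surjective onto the `G`-equivariant `ℂ`-linear endomorphisms of `M`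
    (∀ Φ : M →ₗ[ℂ] M,
        (∀ (g : G) (β γ : M), ((γ : G → ℂ) = fun x => (β : G → ℂ) (g⁻¹ * x)) →
          ((Φ γ : G → ℂ) = fun x => (Φ β : G → ℂ) (g⁻¹ * x))) →
        ∃ f, IsHeckeFun O f ∧ ∀ β : M, ((Φ β : G → ℂ) = hConv μ (β : G → ℂ) f)) :=
  hecke_algebra_is_opposite_endomorphism_algebra_general μ O hOc hOo hμO M hM
end

section
/- Let G be a t.d.l.c. group, μ a left Haar measure on G, O a compact open subgroup, and g ∈ G. Then the subgroup O ∩ gOg⁻¹ has finite index in O, and μ(OgO) = [O : O ∩ gOg⁻¹] · μ(O), where OgO = {ω₁ g ω₂ : ω₁, ω₂ ∈ O} is the double coset of g. -/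
open MeasureTheory
open scoped Pointwise ENNReal

/-!
`O` acts on `G ⧸ O`, and `OgO` is the preimage of the orbit of `gO`, i.e. a union of left cosets
of `O`, one for each point of the orbit, each of measure `μ O` by left invariance. The orbit is a
compact subset of the discrete space `G ⧸ O`, hence finite, and by orbit–stabilizer its size is
the index in `O` of the stabilizer of `gO`, which is `O ∩ gOg⁻¹`.
-/

namespace Subgroup

variable {G : Type*} [Group G]

lemma preimage_mk_singleton (H : Subgroup G) (a : G) :
    QuotientGroup.mk ⁻¹' {(a : G ⧸ H)} = a • (H : Set G) := by
  ext x
  rw [Set.mem_preimage, Set.mem_singleton_iff, eq_comm, QuotientGroup.eq, mem_leftCoset_iff]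
  rfl

lemma orbit_coe_eq_image_mul_singleton (H : Subgroup G) (g : G) :
    MulAction.orbit H (g : G ⧸ H) = QuotientGroup.mk '' ((H : Set G) * {g}) := by
  rw [Set.mul_singleton, Set.image_image, Set.image_eq_range]
  rfl

lemma preimage_mk_orbit_eq_mul_mul (H : Subgroup G) (g : G) :
    QuotientGroup.mk ⁻¹' MulAction.orbit H (g : G ⧸ H) = (H : Set G) * {g} * H := by
  rw [orbit_coe_eq_image_mul_singleton, QuotientGroup.preimage_image_mk_eq_mul]

lemma relIndex_map_conj_eq_ncard_orbit (H : Subgroup G) (g : G) :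
    (H.map (MulAut.conj g).toMonoidHom).relIndex H = (MulAction.orbit H (g : G ⧸ H)).ncard := by
  have hstab : MulAction.stabilizer G (g : G ⧸ H) = H.map (MulAut.conj g).toMonoidHom := by
    simpa using MulAction.stabilizer_smul_eq_stabilizer_map_conj g ((1 : G) : G ⧸ H)
  rw [← hstab, relIndex, ← MulAction.index_stabilizer]
  rfl

lemma finite_orbit_of_isOpen_of_isCompact [TopologicalSpace G] [IsTopologicalGroup G]
    {H K : Subgroup G} (hH : IsOpen (H : Set G)) (hK : IsCompact (K : Set G)) (x : G ⧸ H) :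
    (MulAction.orbit K x).Finite := by
  have : DiscreteTopology (G ⧸ H) := QuotientGroup.discreteTopology hH
  have horbit : MulAction.orbit K x = (· • x) '' (K : Set G) := by
    rw [Set.image_eq_range]
    rfl
  rw [horbit]
  exact (hK.image (continuous_id.smul continuous_const)).finite_of_discrete

end Subgroup

lemma MeasureTheory.measure_preimage_mk_eq_ncard_mul {G : Type*} [Group G] [MeasurableSpace G]
    [MeasurableSMul G G] (μ : Measure G) [μ.IsMulLeftInvariant] {H : Subgroup G}
    (hH : MeasurableSet (H : Set G)) {s : Set (G ⧸ H)} (hs : s.Finite) :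
    μ (QuotientGroup.mk ⁻¹' s) = s.ncard * μ H := by
  have hfiber (q : G ⧸ H) : QuotientGroup.mk ⁻¹' {q} = q.out • (H : Set G) := by
    rw [← H.preimage_mk_singleton, QuotientGroup.out_eq']
  rw [← hs.coe_toFinset, ← Set.biUnion_preimage_singleton, Finset.set_biUnion_coe,
    measure_biUnion_finset]
  · simp [hfiber, measure_smul, Set.ncard_eq_toFinset_card _ hs]
  · exact fun q _ q' _ hne => (Set.disjoint_singleton.2 hne).preimage _
  · exact fun q _ => hfiber q ▸ hH.const_smul _

theorem measure_double_coset_eq_index_mul_general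
    {G : Type*} [Group G] [TopologicalSpace G] [IsTopologicalGroup G]
    [MeasurableSpace G] [BorelSpace G]
    (μ : Measure G) [μ.IsHaarMeasure]
    (O : Subgroup G) (hOc : IsCompact (O : Set G)) (hOo : IsOpen (O : Set G))
    (g : G) :
    (O.map (MulAut.conj g).toMonoidHom).relIndex O ≠ 0 ∧
    μ ((O : Set G) * {g} * (O : Set G)) =
      ((O.map (MulAut.conj g).toMonoidHom).relIndex O : ℝ≥0∞) * μ (O : Set G) := by
  have hfin := Subgroup.finite_orbit_of_isOpen_of_isCompact hOo hOc (g : G ⧸ O)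
  rw [O.relIndex_map_conj_eq_ncard_orbit, ← O.preimage_mk_orbit_eq_mul_mul]
  exact ⟨((Set.ncard_pos hfin).2 (MulAction.nonempty_orbit _)).ne',
    measure_preimage_mk_eq_ncard_mul μ hOo.measurableSet hfin⟩

/-- For a compact open subgroup `O` of a t.d.l.c. group `G` with left Haar
measure `μ` and `g ∈ G`, the subgroup `O ∩ gOg⁻¹` has finite index in `O` and
`μ(OgO) = [O : O ∩ gOg⁻¹] · μ(O)`. -/
theorem measure_double_coset_eq_index_mul
    {G : Type*} [Group G] [TopologicalSpace G] [IsTopologicalGroup G]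
    [LocallyCompactSpace G] [TotallyDisconnectedSpace G] [T2Space G]
    [MeasurableSpace G] [BorelSpace G]
    (μ : Measure G) [μ.IsHaarMeasure]
    (O : Subgroup G) (hOc : IsCompact (O : Set G)) (hOo : IsOpen (O : Set G))
    (g : G) :
    (O.map (MulAut.conj g).toMonoidHom).relIndex O ≠ 0 ∧
    μ ((O : Set G) * {g} * (O : Set G)) =
      ((O.map (MulAut.conj g).toMonoidHom).relIndex O : ℝ≥0∞) * μ (O : Set G) :=
  measure_double_coset_eq_index_mul_general μ O hOc hOo g
end

section
/- Let G be a t.d.l.c. group, μ a left Haar measure on G, and let O ⊆ U be compact open subgroups of G, so the index n = [U : O] is finite. Then for every z ∈ G: μ(OzO)·μ(U) ≤ n·μ(UzU)·μ(O) and μ(UzU)·μ(O) ≤ n·μ(OzO)·μ(U). Equivalently, (1/n)·(μ(OzO)/μ(O)) ≤ μ(UzU)/μ(U) ≤ n·(μ(OzO)/μ(O)). -/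
/-!
Choose representatives `r` of `U ⧸ O`, so that `U = ⋃ r • O = ⋃ O * {r⁻¹}` with `n = [U : O]` terms.
Left invariance gives `μ U = n μ O` and `μ (UzU) ≤ n μ (OzU)`. The modular character is trivial on
the compact open subgroup `U`, so right translation by `r⁻¹` preserves the measure of the compact
set `OzO`, whence `μ (OzU) ≤ n μ (OzO)`. Together with `OzO ⊆ UzU` this gives both inequalities.
-/

open MeasureTheory
open scoped Pointwise ENNReal

namespace Subgroup

variable {G : Type*} [Group G]

lemma isFiniteRelIndex_of_isOpen_of_isCompact [TopologicalSpace G] [IsTopologicalGroup G]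
    {H K : Subgroup G} (hH : IsOpen (H : Set G)) (hK : IsCompact (K : Set G)) :
    H.IsFiniteRelIndex K := by
  have : CompactSpace K := isCompact_iff_compactSpace.mp hK
  have : Finite (K ⧸ H.subgroupOf K) :=
    quotient_finite_of_isOpen _ (hH.preimage continuous_subtype_val)
  exact ⟨index_ne_zero_of_finite⟩

lemma iUnion_out_smul_of_le {H K : Subgroup G} (hHK : H ≤ K) :
    ⋃ q : K ⧸ H.subgroupOf K, ((q.out : K) : G) • (H : Set G) = K := by
  refine Set.Subset.antisymm (Set.iUnion_subset fun q ↦ ?_) fun k hk ↦ ?_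
  · rintro _ ⟨h, hh, rfl⟩
    exact K.mul_mem (q.out : K).2 (hHK hh)
  · obtain ⟨h, hq⟩ := QuotientGroup.mk_out_eq_mul (H.subgroupOf K) ⟨k, hk⟩
    refine Set.mem_iUnion.mpr ⟨(⟨k, hk⟩ : K), ((h : K) : G)⁻¹, H.inv_mem h.2, ?_⟩
    simp [hq]

lemma iUnion_mul_inv_out_of_le {H K : Subgroup G} (hHK : H ≤ K) :
    ⋃ q : K ⧸ H.subgroupOf K, (H : Set G) * {((q.out : K) : G)⁻¹} = K := by
  rw [← inv_coe_set (H := K), ← iUnion_out_smul_of_le hHK, Set.iUnion_inv]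
  refine Set.iUnion_congr fun q ↦ ?_
  ext x
  simp [Set.mem_smul_set_iff_inv_smul_mem, Set.mul_singleton]

lemma relIndex_mul_measure [MeasurableSpace G] [MeasurableMul G] {H K : Subgroup G} (hHK : H ≤ K)
    [H.IsFiniteRelIndex K] (hH : MeasurableSet (H : Set G)) (hK : MeasurableSet (K : Set G))
    (μ : Measure G) [μ.IsMulLeftInvariant] :
    H.relIndex K * μ H = μ K := by
  have hval : MeasurableEmbedding K.subtype := .subtype_coe hK
  have : MeasurableMul K :=
    ⟨fun k ↦ (measurable_const_mul (k : G)).comp measurable_subtype_coe |>.subtype_mk,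
      fun k ↦ (measurable_mul_const (k : G)).comp measurable_subtype_coe |>.subtype_mk⟩
  have : (μ.comap K.subtype).IsMulLeftInvariant := .comap μ hval
  have := (H.subgroupOf K).index_mul_measure (hH.preimage measurable_subtype_coe)
    (μ.comap K.subtype)
  rwa [hval.comap_apply, hval.comap_apply, Set.image_univ, coe_subgroupOf, coe_subtype,
    Set.image_preimage_eq_inter_range, Subtype.range_coe_subtype, SetLike.setOfPred_mem_eq,
    Set.inter_eq_left.mpr hHK] at this

end Subgroup

namespace MeasureTheory

variable {G : Type*} [Group G]

lemma measure_subgroup_mul_le [MeasurableSpace G] {H K : Subgroup G} (hHK : H ≤ K)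
    [H.IsFiniteRelIndex K] (μ : Measure G) [μ.IsMulLeftInvariant] (S : Set G) :
    μ (K * S) ≤ H.relIndex K * μ (H * S) := by
  have : Fintype (K ⧸ H.subgroupOf K) := .ofFinite _
  calc μ (K * S) = μ (⋃ q : K ⧸ H.subgroupOf K, ((q.out : K) : G) • ((H : Set G) * S)) := by
        simp_rw [← Subgroup.iUnion_out_smul_of_le hHK, Set.iUnion_mul, smul_mul_assoc]
    _ ≤ ∑ q : K ⧸ H.subgroupOf K, μ (((q.out : K) : G) • ((H : Set G) * S)) :=
        measure_iUnion_fintype_le μ _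
    _ = H.relIndex K * μ (H * S) := by
        simp [measure_smul, Subgroup.relIndex, Subgroup.index]

variable [TopologicalSpace G] [IsTopologicalGroup G] [LocallyCompactSpace G]

lemma Measure.modularCharacterFun_eq_one_of_mem {K : Subgroup G} (hKc : IsCompact (K : Set G))
    (hKo : IsOpen (K : Set G)) {g : G} (hg : g ∈ K) : modularCharacterFun g = 1 := by
  borelize G
  have hK : (map (· * g) haar) K = modularCharacterFun g • haar (K : Set G) := by
    rw [modularCharacterFun_eq_haarScalarFactor haar g]
    exact measure_isHaarMeasure_eq_smul_of_isOpen _ _ hKo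
  have hpre : (· * g) ⁻¹' (K : Set G) = K := by
    ext x
    exact K.mul_mem_cancel_right hg
  rw [map_apply (measurable_mul_const g) hKo.measurableSet, hpre] at hK
  have h0 : haar (K : Set G) ≠ 0 := (hKo.measure_pos haar ⟨1, K.one_mem⟩).ne'
  have htop : haar (K : Set G) ≠ ∞ := hKc.measure_lt_top.ne
  exact_mod_cast (ENNReal.mul_eq_right h0 htop).mp hK.symm

variable [MeasurableSpace G] [BorelSpace G]

lemma Measure.measure_mul_singleton_of_isCompact_closure (μ : Measure G) [μ.IsHaarMeasure]
    {S : Set G} (hS : IsCompact (closure S)) (g : G) :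
    μ (S * {g}) = modularCharacterFun g⁻¹ * μ S := by
  have hmap : μ (S * {g}) = map (· * g⁻¹) μ S := by
    rw [Set.mul_singleton, Set.image_mul_right]
    exact ((MeasurableEquiv.mulRight g⁻¹).map_apply S).symm
  rw [hmap, modularCharacterFun_eq_haarScalarFactor μ,
    measure_isMulInvariant_eq_smul_of_isCompact_closure _ μ hS]
  rfl

lemma measure_mul_subgroup_le (μ : Measure G) [μ.IsHaarMeasure] {H K : Subgroup G} (hHK : H ≤ K)
    [H.IsFiniteRelIndex K] (hKc : IsCompact (K : Set G)) (hKo : IsOpen (K : Set G)) {S : Set G}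
    (hS : IsCompact (closure (S * (H : Set G)))) :
    μ (S * K) ≤ H.relIndex K * μ (S * H) := by
  have : Fintype (K ⧸ H.subgroupOf K) := .ofFinite _
  calc μ (S * K) = μ (⋃ q : K ⧸ H.subgroupOf K, S * H * {((q.out : K) : G)⁻¹}) := by
        simp_rw [← Subgroup.iUnion_mul_inv_out_of_le hHK, Set.mul_iUnion, mul_assoc]
    _ ≤ ∑ q : K ⧸ H.subgroupOf K, μ (S * H * {((q.out : K) : G)⁻¹}) :=
        measure_iUnion_fintype_le μ _
    _ = ∑ _q : K ⧸ H.subgroupOf K, μ (S * H) := by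
        refine Finset.sum_congr rfl fun q _ ↦ ?_
        rw [Measure.measure_mul_singleton_of_isCompact_closure μ hS, inv_inv,
          Measure.modularCharacterFun_eq_one_of_mem hKc hKo (q.out : K).2, ENNReal.coe_one,
          one_mul]
    _ = H.relIndex K * μ (S * H) := by
        simp [Subgroup.relIndex, Subgroup.index]

end MeasureTheory

theorem double_coset_measures_comparison_general
    {G : Type*} [Group G] [TopologicalSpace G] [IsTopologicalGroup G]
    [LocallyCompactSpace G]
    [MeasurableSpace G] [BorelSpace G]
    (μ : Measure G) [μ.IsHaarMeasure]
    (O U : Subgroup G) (hOU : O ≤ U)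
    (hOc : IsCompact (O : Set G)) (hOo : IsOpen (O : Set G))
    (hUc : IsCompact (U : Set G)) (hUo : IsOpen (U : Set G))
    (z : G) :
    O.relIndex U ≠ 0 ∧
    μ ((O : Set G) * {z} * (O : Set G)) * μ (U : Set G) ≤
      (O.relIndex U : ℝ≥0∞) *
        (μ ((U : Set G) * {z} * (U : Set G)) * μ (O : Set G)) ∧
    μ ((U : Set G) * {z} * (U : Set G)) * μ (O : Set G) ≤
      (O.relIndex U : ℝ≥0∞) *
        (μ ((O : Set G) * {z} * (O : Set G)) * μ (U : Set G)) := by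
  have : O.IsFiniteRelIndex U := Subgroup.isFiniteRelIndex_of_isOpen_of_isCompact hOo hUc
  set n := O.relIndex U
  have hU : (n : ℝ≥0∞) * μ O = μ U :=
    O.relIndex_mul_measure hOU hOo.measurableSet hUo.measurableSet μ
  have hOzO_le : μ ((O : Set G) * {z} * O) ≤ μ ((U : Set G) * {z} * U) :=
    measure_mono (Set.mul_subset_mul (Set.mul_subset_mul_right hOU) hOU)
  have hUzU : μ ((U : Set G) * {z} * U) ≤ n * μ ((O : Set G) * {z} * U) := by
    simpa only [mul_assoc] using measure_subgroup_mul_le hOU μ ({z} * U)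
  have hOzU : μ ((O : Set G) * {z} * U) ≤ n * μ ((O : Set G) * {z} * O) :=
    measure_mul_subgroup_le μ hOU hUc hUo ((hOc.mul isCompact_singleton).mul hOc).closure
  refine ⟨Subgroup.relIndex_ne_zero, ?_, ?_⟩
  · calc μ ((O : Set G) * {z} * O) * μ U = n * (μ ((O : Set G) * {z} * O) * μ O) := by
          rw [← hU]; ring
      _ ≤ n * (μ ((U : Set G) * {z} * U) * μ O) := by gcongr
  · calc μ ((U : Set G) * {z} * U) * μ O ≤ n * (n * μ ((O : Set G) * {z} * O)) * μ O := by
          gcongr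
          exact hUzU.trans (by gcongr)
      _ = n * (μ ((O : Set G) * {z} * O) * μ U) := by
          rw [← hU]; ring

/-- Let `O ⊆ U` be compact open subgroups of a t.d.l.c. group `G` with left
Haar measure `μ`, and `n = [U : O]` (finite). Then for every `z ∈ G`:
`μ(OzO)·μ(U) ≤ n·μ(UzU)·μ(O)` and `μ(UzU)·μ(O) ≤ n·μ(OzO)·μ(U)`. -/
theorem double_coset_measures_comparison
    {G : Type*} [Group G] [TopologicalSpace G] [IsTopologicalGroup G]
    [LocallyCompactSpace G] [TotallyDisconnectedSpace G] [T2Space G]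
    [MeasurableSpace G] [BorelSpace G]
    (μ : Measure G) [μ.IsHaarMeasure]
    (O U : Subgroup G) (hOU : O ≤ U)
    (hOc : IsCompact (O : Set G)) (hOo : IsOpen (O : Set G))
    (hUc : IsCompact (U : Set G)) (hUo : IsOpen (U : Set G))
    (z : G) :
    O.relIndex U ≠ 0 ∧
    μ ((O : Set G) * {z} * (O : Set G)) * μ (U : Set G) ≤
      (O.relIndex U : ℝ≥0∞) *
        (μ ((U : Set G) * {z} * (U : Set G)) * μ (O : Set G)) ∧
    μ ((U : Set G) * {z} * (U : Set G)) * μ (O : Set G) ≤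
      (O.relIndex U : ℝ≥0∞) *
        (μ ((O : Set G) * {z} * (O : Set G)) * μ (U : Set G)) :=
  double_coset_measures_comparison_general μ O U hOU hOc hOo hUc hUo z
end

section
/- Let G be a t.d.l.c. group with left Haar measure μ. Say that a compact open subgroup O of G satisfies the double coset property if for every natural number n the set of double cosets D ∈ O\G/O with μ(D) = n·μ(O) is finite. Then: if G satisfies the double coset property with respect to some compact open subgroup, it satisfies the double coset property with respect to every compact open subgroup. -/
open MeasureTheory
open scoped Pointwise ENNReal

/-- A compact open subgroup `O` of a t.d.l.c. group `G` (with left Haar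
measure `μ`) satisfies the *double coset property* if for every `n : ℕ` there
are only finitely many double cosets `OgO` with `μ(OgO) = n·μ(O)`. -/
def DoubleCosetProperty {G : Type*} [Group G] [TopologicalSpace G]
    [MeasurableSpace G] (μ : Measure G) (O : Subgroup G) : Prop :=
  ∀ n : ℕ,
    {D : Set G | (∃ g : G, D = (O : Set G) * {g} * (O : Set G)) ∧
      μ D = (n : ℝ≥0∞) * μ (O : Set G)}.Finite

/-!
Put `K = O ⊓ O'`. Covering `O` by finitely many left cosets `vK` and right cosets `Ku` (`u ∈ O`)
gives `OgO ⊆ ⋃ v (KgK) u`, so `μ(OgO) ≤ C · μ(KgK) ≤ C · μ(O'gO')` for a constant `C`: right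
translation by `u` preserves `μ` because the modular character is trivial on the compact
subgroup `O`. Since `μ(OgO)` is an integer multiple of `μ(O)`, the double coset property of `O`
confines the `g` with `μ(O'gO') = n · μ(O')` to a finite union of compact `O`-double cosets, and
a compact set meets only finitely many of the open `O'`-double cosets.
-/

open Set DoubleCoset

theorem measure_finset_mul_le {G : Type*} [Group G] [MeasurableSpace G] [MeasurableMul G]
    (μ : Measure G) [μ.IsMulLeftInvariant] (t : Finset G) (S : Set G) :
    μ (↑t * S) ≤ t.card * μ S := by
  classical
  calc μ (↑t * S) = μ (⋃ v ∈ t, v • S) := by rw [← iUnion_mul_left_image]; rfl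
    _ ≤ ∑ v ∈ t, μ (v • S) := measure_biUnion_finset_le _ _
    _ = t.card * μ S := by simp [measure_smul]

section Topology

variable {G : Type*} [Group G] [TopologicalSpace G] [ContinuousMul G]

theorem isCompact_doubleCoset {s t : Set G} (hs : IsCompact s) (ht : IsCompact t) (a : G) :
    IsCompact (doubleCoset a s t) :=
  (hs.mul isCompact_singleton).mul ht

theorem IsCompact.exists_finset_subset_finset_mul {A U : Set G} (hA : IsCompact A)
    (hU : IsOpen U) (h1U : (1 : G) ∈ U) : ∃ t : Finset G, A ⊆ ↑t * U := by
  obtain ⟨s, -, hs, hcov⟩ := hA.elim_finite_subcover_image (b := A) (c := fun a => a • U)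
    (fun a _ => hU.smul a) (fun a ha => mem_biUnion ha ⟨1, h1U, mul_one a⟩)
  exact ⟨hs.toFinset, by simpa only [hs.coe_toFinset] using hcov.trans_eq iUnion_mul_left_image⟩

theorem IsCompact.exists_finset_subset_mul_finset {A U : Set G} (hA : IsCompact A)
    (hU : IsOpen U) (h1U : (1 : G) ∈ U) : ∃ t : Finset G, ↑t ⊆ A ∧ A ⊆ U * ↑t := by
  obtain ⟨s, hsA, hs, hcov⟩ := hA.elim_finite_subcover_image (b := A)
    (c := fun a => (· * a) '' U) (fun a _ => isOpenMap_mul_right a U hU)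
    (fun a ha => mem_biUnion ha ⟨1, h1U, one_mul a⟩)
  exact ⟨hs.toFinset, by simpa using hsA,
    by simpa only [hs.coe_toFinset] using hcov.trans_eq iUnion_mul_right_image⟩

theorem finite_setOf_doubleCoset_of_isCompact {H K : Subgroup G} (hK : IsOpen (K : Set G))
    {B : Set G} (hB : IsCompact B) : {D | ∃ g ∈ B, D = doubleCoset g H K}.Finite := by
  obtain ⟨s, -, hs, hcov⟩ := hB.elim_finite_subcover_image (b := B)
    (c := fun g => doubleCoset g H K) (fun g _ => hK.mul_left)
    (fun g hg => mem_biUnion hg (mem_doubleCoset_self H K g))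
  refine (hs.image (doubleCoset · H K)).subset ?_
  rintro D ⟨g, hg, rfl⟩
  obtain ⟨g', hg', hgg'⟩ := mem_iUnion₂.1 (hcov hg)
  exact ⟨g', hg', (doubleCoset_eq_of_mem hgg').symm⟩

end Topology

theorem exists_measure_eq_natCast_mul_of_mul_subgroup {G : Type*} [Group G] [TopologicalSpace G]
    [IsTopologicalGroup G] [MeasurableSpace G] [BorelSpace G] (μ : Measure G)
    [μ.IsMulLeftInvariant] {O : Subgroup G} (hOo : IsOpen (O : Set G)) {B : Set G}
    (hB : IsCompact B) (hBO : B * O = B) : ∃ k : ℕ, μ B = k * μ O := by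
  classical
  have := QuotientGroup.discreteTopology hOo
  set π : G → G ⧸ O := QuotientGroup.mk
  have hfin : (π '' B).Finite := (hB.image continuous_quotient_mk').finite_of_discrete
  have hfiber : ∀ q, μ (π ⁻¹' {q}) = μ O := by
    intro q
    obtain ⟨g, rfl⟩ := QuotientGroup.mk_surjective q
    rw [← image_singleton, QuotientGroup.preimage_image_mk_eq_mul, singleton_mul]
    exact measure_smul μ g (O : Set G)
  refine ⟨hfin.toFinset.card, ?_⟩
  calc μ B = μ (⋃ q ∈ hfin.toFinset, π ⁻¹' {q}) := by
        rw [← preimage_iUnion₂]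
        simp only [Finite.mem_toFinset, biUnion_of_singleton]
        rw [QuotientGroup.preimage_image_mk_eq_mul, hBO]
    _ = ∑ q ∈ hfin.toFinset, μ (π ⁻¹' {q}) :=
        measure_biUnion_finset (pairwiseDisjoint_fiber _ _)
          fun q _ => ((isOpen_discrete {q}).preimage continuous_quotient_mk').measurableSet
    _ = hfin.toFinset.card * μ O := by simp [hfiber]

section Haar

variable {G : Type*} [Group G] [TopologicalSpace G] [IsTopologicalGroup G]
  [MeasurableSpace G] [BorelSpace G] (μ : Measure G) [μ.IsHaarMeasure]
  {O : Subgroup G} (hOc : IsCompact (O : Set G)) (hOo : IsOpen (O : Set G))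
include hOc hOo

theorem DoubleCosetProperty.exists_isCompact_of_measure_doubleCoset_le
    (hO : DoubleCosetProperty μ O) {c : ℝ≥0∞} (hc : c ≠ ∞) :
    ∃ B : Set G, IsCompact B ∧ ∀ g, μ (doubleCoset g O O) ≤ c → g ∈ B := by
  obtain ⟨N, hN⟩ := ENNReal.exists_nat_mul_gt (hOo.measure_ne_zero μ ⟨1, O.one_mem⟩) hc
  set T := ⋃ k ∈ Finset.range N,
    {D : Set G | (∃ g, D = doubleCoset g O O) ∧ μ D = k * μ O}
  have hT : T.Finite := (Finset.range N).finite_toSet.biUnion fun k _ => hO k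
  refine ⟨⋃ D ∈ T, D, hT.isCompact_biUnion ?_, fun g hg => ?_⟩
  · simp only [T, mem_iUnion₂]
    rintro D ⟨k, -, ⟨g, rfl⟩, -⟩
    exact isCompact_doubleCoset hOc hOc g
  · obtain ⟨k, hk⟩ := exists_measure_eq_natCast_mul_of_mul_subgroup μ hOo
      (isCompact_doubleCoset hOc hOc g) (by rw [doubleCoset, mul_assoc, coe_mul_coe])
    have hkN : k < N := by
      have : (k : ℝ≥0∞) * μ O < N * μ O := hk ▸ hg.trans_lt hN
      exact_mod_cast lt_of_mul_lt_mul_right' this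
    exact mem_biUnion (mem_iUnion₂.2 ⟨k, Finset.mem_range.2 hkN, ⟨g, rfl⟩, hk⟩)
      (mem_doubleCoset_self O O g)

theorem measure_mul_singleton_of_mem [LocallyCompactSpace G] {u : G} (hu : u ∈ O) {S : Set G}
    (hS : IsCompact (closure S)) : μ (S * {u}) = μ S := by
  set c := Measure.haarScalarFactor (μ.map (· * u⁻¹)) μ
  have key : ∀ s : Set G, IsCompact (closure s) → μ (s * {u}) = c • μ s := fun s hs => by
    rw [← Measure.measure_isMulInvariant_eq_smul_of_isCompact_closure _ _ hs,
      show (· * u⁻¹) = ⇑(MeasurableEquiv.mulRight u⁻¹) from rfl, MeasurableEquiv.map_apply,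
      mul_singleton, image_mul_right]
    rfl
  have hc : (c : ℝ≥0∞) = 1 := by
    have := key O (by rwa [(O.isClosed_of_isOpen hOo).closure_eq])
    rw [Subgroup.subgroup_mul_singleton hu, ENNReal.smul_def, smul_eq_mul] at this
    exact (ENNReal.mul_eq_right (hOo.measure_ne_zero μ ⟨1, O.one_mem⟩)
      hOc.measure_lt_top.ne).1 this.symm
  rw [key S hS, ENNReal.smul_def, smul_eq_mul, hc, one_mul]

theorem measure_mul_finset_le [LocallyCompactSpace G] {t : Finset G} (ht : ↑t ⊆ (O : Set G))
    {S : Set G} (hS : IsCompact (closure S)) : μ (S * ↑t) ≤ t.card * μ S := by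
  classical
  calc μ (S * ↑t) = μ (⋃ u ∈ t, S * {u}) := by
        rw [← iUnion_mul_right_image]; simp only [Finset.mem_coe, mul_singleton]
    _ ≤ ∑ u ∈ t, μ (S * {u}) := measure_biUnion_finset_le _ _
    _ = t.card * μ S := by
        rw [Finset.sum_congr rfl fun u hu => measure_mul_singleton_of_mem μ hOc hOo (ht hu) hS]
        simp

theorem exists_measure_doubleCoset_le_natCast_mul [LocallyCompactSpace G] {O' : Subgroup G}
    (hO'o : IsOpen (O' : Set G)) :
    ∃ C : ℕ, ∀ g, μ (doubleCoset g O O) ≤ C * μ (doubleCoset g O' O') := by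
  set K := O ⊓ O'
  have hKo : IsOpen (K : Set G) := hOo.inter hO'o
  have hKc : IsCompact (K : Set G) :=
    hOc.of_isClosed_subset (K.isClosed_of_isOpen hKo) inter_subset_left
  obtain ⟨t, ht⟩ := hOc.exists_finset_subset_finset_mul hKo K.one_mem
  obtain ⟨t', ht'O, ht'⟩ := hOc.exists_finset_subset_mul_finset hKo K.one_mem
  refine ⟨t.card * t'.card, fun g => ?_⟩
  have hOgO : doubleCoset g O O ⊆ ↑t * (doubleCoset g K K * ↑t') := by
    calc doubleCoset g O O ⊆ ↑t * K * {g} * (K * ↑t') := by unfold doubleCoset; gcongr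
      _ = ↑t * (doubleCoset g K K * ↑t') := by simp only [doubleCoset, mul_assoc]
  have hKO' : doubleCoset g K K ⊆ doubleCoset g O' O' := by
    have : (K : Set G) ⊆ O' := inter_subset_right
    unfold doubleCoset
    gcongr
  calc μ (doubleCoset g O O) ≤ μ (↑t * (doubleCoset g K K * ↑t')) := measure_mono hOgO
    _ ≤ t.card * μ (doubleCoset g K K * ↑t') := measure_finset_mul_le μ t _
    _ ≤ t.card * (t'.card * μ (doubleCoset g K K)) := by
        gcongr
        exact measure_mul_finset_le μ hOc hOo ht'O (isCompact_doubleCoset hKc hKc g).closure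
    _ ≤ t.card * (t'.card * μ (doubleCoset g O' O')) := by gcongr
    _ = _ := by push_cast; ring

end Haar

theorem doubleCosetProperty_of_exists_general
    {G : Type*} [Group G] [TopologicalSpace G] [IsTopologicalGroup G]
    [LocallyCompactSpace G]
    [MeasurableSpace G] [BorelSpace G]
    (μ : Measure G) [μ.IsHaarMeasure]
    (h : ∃ O : Subgroup G, IsCompact (O : Set G) ∧ IsOpen (O : Set G) ∧
      DoubleCosetProperty μ O) :
    ∀ O' : Subgroup G, IsCompact (O' : Set G) → IsOpen (O' : Set G) →
      DoubleCosetProperty μ O' := by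
  obtain ⟨O, hOc, hOo, hO⟩ := h
  intro O' hO'c hO'o n
  obtain ⟨C, hC⟩ := exists_measure_doubleCoset_le_natCast_mul μ hOc hOo hO'o
  obtain ⟨B, hB, hmem⟩ := hO.exists_isCompact_of_measure_doubleCoset_le μ hOc hOo
    (c := C * (n * μ O')) (by finiteness [hO'c.measure_lt_top (μ := μ)])
  refine (finite_setOf_doubleCoset_of_isCompact (H := O') hO'o hB).subset ?_
  rintro D ⟨⟨g, rfl⟩, hD⟩
  exact ⟨g, hmem g ((hC g).trans_eq (congrArg _ hD)), rfl⟩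

/-- If a t.d.l.c. group `G` satisfies the double coset property with respect
to some compact open subgroup, then it satisfies it with respect to every
compact open subgroup. -/
theorem doubleCosetProperty_of_exists
    {G : Type*} [Group G] [TopologicalSpace G] [IsTopologicalGroup G]
    [LocallyCompactSpace G] [TotallyDisconnectedSpace G] [T2Space G]
    [MeasurableSpace G] [BorelSpace G]
    (μ : Measure G) [μ.IsHaarMeasure]
    (h : ∃ O : Subgroup G, IsCompact (O : Set G) ∧ IsOpen (O : Set G) ∧
      DoubleCosetProperty μ O) :
    ∀ O' : Subgroup G, IsCompact (O' : Set G) → IsOpen (O' : Set G) →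
      DoubleCosetProperty μ O' :=
  doubleCosetProperty_of_exists_general μ h
end

section
/- Let (W,S) be a Coxeter system with length function ℓ, and let J, K ⊆ S. Let x ∈ W be a minimal-length (W_J, W_K)-double coset representative, i.e., ℓ(x) ≤ ℓ(w) for every w ∈ W_J·x·W_K. Set K ∩ x⁻¹Jx = {s ∈ K : x s x⁻¹ ∈ J} and J ∩ xKx⁻¹ = {t ∈ J : x⁻¹ t x ∈ K}. Then the map c_x(w) = x w x⁻¹ restricts to a group isomorphism from the subgroup ⟨K ∩ x⁻¹Jx⟩ generated by K ∩ x⁻¹Jx onto the subgroup ⟨J ∩ xKx⁻¹⟩ generated by J ∩ xKx⁻¹, and it preserves length: ℓ(x w x⁻¹) = ℓ(w) for every w ∈ ⟨K ∩ x⁻¹Jx⟩. -/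
/-!
If `x` is of minimal length in `W_J x W_K`, lengths add: `ℓ (x u) = ℓ x + ℓ u` for `u ∈ W_K` and
`ℓ (v x) = ℓ v + ℓ x` for `v ∈ W_J`. For `w ∈ ⟨K ∩ x⁻¹Jx⟩` both apply to
`x w = (x w x⁻¹) x`, whence `ℓ (x w x⁻¹) = ℓ w`; that conjugation by `x` maps `⟨K ∩ x⁻¹Jx⟩` onto
`⟨J ∩ xKx⁻¹⟩` is immediate from the generators.

Additivity is proved along a reduced `K`-word `ω` for `u`. If `s ∈ K` were a right descent of
`x (π ω)`, then `s` would occur in the right inversion sequence of `α ++ ω`, `α` a reduced word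
for `x`: either as the `π ω`-conjugate of an inversion of `x` lying in `W_K`, contradicting
minimality, or as an inversion of `π ω`, contradicting that `ω s` is reduced. That a right
descent `s` of `π ω` occurs in the right inversion sequence of `ω` (the exchange condition) comes
from the representation of Björner–Brenti on `W × ZMod 2`, which shows that the parity of the
number of occurrences of `t` in the right inversion sequence of a word depends only on its product.
-/

theorem conj_eq_iff_eq_conj {G : Type*} [Group G] (g t u : G) :
    g * t * g⁻¹ = u ↔ t = g⁻¹ * u * g := by
  constructor <;> rintro rfl <;> group

theorem MulAut.conj_image_setOf_mem_and_conj_mem {G : Type*} [Group G] (S T : Set G)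
    (x : G) : MulAut.conj x '' {w | w ∈ S ∧ x * w * x⁻¹ ∈ T} = {w | w ∈ T ∧ x⁻¹ * w * x ∈ S} := by
  ext v
  constructor
  · rintro ⟨w, ⟨hwS, hwT⟩, rfl⟩
    refine ⟨hwT, ?_⟩
    simpa [mul_assoc] using hwS
  · rintro ⟨hvT, hvS⟩
    exact ⟨x⁻¹ * v * x, ⟨hvS, by simpa [mul_assoc] using hvT⟩, by simp [mul_assoc]⟩

namespace CoxeterSystem

variable {B W : Type*} [Group W] {M : CoxeterMatrix B} (cs : CoxeterSystem M W)

local prefix:100 "s " => cs.simple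
local prefix:100 "π " => cs.wordProd
local prefix:100 "ℓ " => cs.length
local prefix:100 "ris " => cs.rightInvSeq

theorem simple_mul_mul_simple_eq_simple_iff (i : B) (t : W) : s i * t * s i = s i ↔ t = s i := by
  simpa using conj_eq_iff_eq_conj (s i) t (s i)

section SignRepresentation

open scoped Classical

noncomputable def signedConj (i : B) : Equiv.Perm (W × ZMod 2) :=
  Function.Involutive.toPerm
    (fun p => (s i * p.1 * s i, p.2 + if p.1 = s i then 1 else 0)) fun p => by
      ext
      · simp [mul_assoc]
      · simp only [simple_mul_mul_simple_eq_simple_iff, add_assoc, CharTwo.add_self_eq_zero,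
          add_zero]

theorem signedConj_apply (i : B) (p : W × ZMod 2) :
    cs.signedConj i p = (s i * p.1 * (s i)⁻¹, p.2 + if p.1 = s i then 1 else 0) := by
  rw [inv_simple]; rfl

theorem conj_simple_mul_simple_pow_eq_iff (i j : B) (n r : ℕ) (t : W) :
    (s i * s j) ^ n * t * ((s i * s j) ^ n)⁻¹ = (s j * s i) ^ r * s j ↔
      t = (s j * s i) ^ (2 * n + r) * s j := by
  have hsemi : s j * (s i * s j) ^ n = (s j * s i) ^ n * s j :=
    (SemiconjBy.pow_right (by simp only [SemiconjBy, mul_assoc]) n).eq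
  rw [conj_eq_iff_eq_conj, ← inv_pow, mul_inv_rev, inv_simple, inv_simple]
  simp only [mul_assoc, hsemi]
  simp only [← mul_assoc, ← pow_add]
  ring_nf

theorem signedConj_mul_signedConj_apply (i j : B) (p : W × ZMod 2) :
    (cs.signedConj i * cs.signedConj j) p = (s i * s j * p.1 * (s i * s j)⁻¹,
      p.2 + ∑ r ∈ Finset.range 2, if p.1 = (s j * s i) ^ r * s j then 1 else 0) := by
  have h : s j * p.1 * (s j)⁻¹ = s i ↔ p.1 = (s j * s i) ^ 1 * s j := by
    rw [conj_eq_iff_eq_conj, inv_simple, pow_one]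
  rw [Equiv.Perm.mul_apply, signedConj_apply, signedConj_apply, h]
  ext
  · simp only [mul_inv_rev, mul_assoc]
  · simp only [Finset.sum_range_succ, Finset.sum_range_zero, pow_zero, one_mul, zero_add,
      add_assoc]

theorem signedConj_mul_signedConj_pow_apply (i j : B) (n : ℕ) (p : W × ZMod 2) :
    ((cs.signedConj i * cs.signedConj j) ^ n) p = ((s i * s j) ^ n * p.1 * ((s i * s j) ^ n)⁻¹,
      p.2 + ∑ r ∈ Finset.range (2 * n), if p.1 = (s j * s i) ^ r * s j then 1 else 0) := by
  induction n with
  | zero => simp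
  | succ n ih =>
    rw [pow_succ', Equiv.Perm.mul_apply, ih, signedConj_mul_signedConj_apply]
    ext
    · simp only [pow_succ', mul_inv_rev, mul_assoc]
    · simp only [conj_simple_mul_simple_pow_eq_iff, mul_add, mul_one, Finset.sum_range_add,
        add_assoc]

theorem isLiftable_signedConj : M.IsLiftable cs.signedConj := by
  intro i j
  ext p : 1
  have hm : (s j * s i) ^ M i j = 1 := by rw [M.symmetric]; exact cs.simple_mul_simple_pow j i
  rw [signedConj_mul_signedConj_pow_apply, simple_mul_simple_pow, two_mul, Finset.sum_range_add]
  simp only [pow_add, hm, one_mul, CharTwo.add_self_eq_zero, add_zero, mul_one, inv_one,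
    Equiv.Perm.one_apply]

noncomputable def signedConjRep : W →* Equiv.Perm (W × ZMod 2) :=
  cs.lift ⟨cs.signedConj, cs.isLiftable_signedConj⟩

theorem signedConjRep_wordProd (ω : List B) (t : W) (ε : ZMod 2) :
    cs.signedConjRep (π ω) (t, ε) = (π ω * t * (π ω)⁻¹, ε + (ris ω).count t) := by
  induction ω with
  | nil => simp
  | cons i ω ih =>
    rw [wordProd_cons, map_mul, Equiv.Perm.mul_apply, ih, signedConjRep,
      lift_apply_simple, signedConj_apply, conj_eq_iff_eq_conj]
    ext
    · simp only [mul_inv_rev, mul_assoc]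
    · simp only [rightInvSeq, List.count_cons, beq_iff_eq, eq_comm (b := t), Nat.cast_add,
        Nat.cast_ite, Nat.cast_one, Nat.cast_zero, add_assoc]

theorem count_rightInvSeq_eq_of_wordProd_eq {ω ω' : List B} (h : π ω = π ω') (t : W) :
    ((ris ω).count t : ZMod 2) = (ris ω').count t := by
  have h₀ := cs.signedConjRep_wordProd ω t 0
  rw [h, signedConjRep_wordProd] at h₀
  simpa using (congrArg Prod.snd h₀).symm

theorem simple_mem_rightInvSeq_of_isRightDescent {ω : List B} {i : B}
    (hi : cs.IsRightDescent (π ω) i) : s i ∈ ris ω := by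
  obtain ⟨δ, hδ, hδω⟩ := cs.exists_isReduced (π ω * s i)
  have hprod : π (δ ++ [i]) = π ω := by
    rw [wordProd_append, wordProd_singleton, ← hδω, simple_mul_simple_cancel_right]
  have hred : cs.IsReduced (δ ++ [i]) := by
    have := cs.length_mul_simple (π ω) i
    rw [IsRightDescent] at hi
    rw [IsReduced, hprod, List.length_append, List.length_singleton, ← hδ.eq, ← hδω]
    omega
  have hmem : s i ∈ ris (δ ++ [i]) := by
    rw [← List.concat_eq_append, rightInvSeq_concat, List.concat_eq_append]
    exact List.mem_append_right _ (List.mem_singleton_self _)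
  have hcount : ((ris ω).count (s i) : ZMod 2) = 1 := by
    rw [cs.count_rightInvSeq_eq_of_wordProd_eq hprod.symm,
      List.count_eq_one_of_mem hred.nodup_rightInvSeq hmem, Nat.cast_one]
  by_contra hnot
  rw [List.count_eq_zero.mpr hnot, Nat.cast_zero] at hcount
  exact zero_ne_one hcount

end SignRepresentation

theorem exists_wordProd_eraseIdx_eq_of_isRightDescent {ω : List B} {i : B}
    (hi : cs.IsRightDescent (π ω) i) : ∃ j < ω.length, π ω * s i = π (ω.eraseIdx j) := by
  obtain ⟨j, hj, hget⟩ :=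
    List.mem_iff_getElem.mp (cs.simple_mem_rightInvSeq_of_isRightDescent hi)
  refine ⟨j, cs.length_rightInvSeq ω ▸ hj, ?_⟩
  rw [← wordProd_mul_getD_rightInvSeq, List.getD_eq_getElem _ _ hj, hget]

theorem rightInvSeq_append (ω ω' : List B) :
    ris (ω ++ ω') = (ris ω).map (MulAut.conj (π ω')⁻¹) ++ ris ω' := by
  induction ω with
  | nil => simp
  | cons i ω ih =>
    simp only [List.cons_append, rightInvSeq, ih, List.map_cons, MulAut.conj_apply,
      wordProd_append, inv_inv, mul_inv_rev]
    group

section Parabolic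

variable {cs} {K : Set B}

theorem wordProd_mem_closure {ω : List B} (hω : ∀ i ∈ ω, i ∈ K) :
    π ω ∈ Subgroup.closure (cs.simple '' K) := by
  refine Subgroup.list_prod_mem _ fun _ hw => ?_
  obtain ⟨i, hi, rfl⟩ := List.mem_map.mp hw
  exact Subgroup.subset_closure ⟨i, hω i hi, rfl⟩

theorem exists_isReduced_wordProd_eq_mul_simple {ω : List B} (hωK : ∀ j ∈ ω, j ∈ K)
    (hω : cs.IsReduced ω) {i : B} (hi : i ∈ K) :
    ∃ ω' : List B, (∀ j ∈ ω', j ∈ K) ∧ cs.IsReduced ω' ∧ π ω' = π ω * s i := by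
  rcases cs.length_mul_simple (π ω) i with hup | hdown
  · refine ⟨ω ++ [i], ?_, ?_, by rw [wordProd_append, wordProd_singleton]⟩
    · simpa [or_imp, forall_and] using ⟨hωK, hi⟩
    · rw [IsReduced, wordProd_append, wordProd_singleton, hup, hω.eq, List.length_append,
        List.length_singleton]
  · obtain ⟨j, hj, hexch⟩ := cs.exists_wordProd_eraseIdx_eq_of_isRightDescent
      (show ℓ (π ω * s i) < ℓ (π ω) by omega)
    refine ⟨ω.eraseIdx j, fun k hk => hωK k ((List.eraseIdx_sublist ω j).subset hk), ?_,
      hexch.symm⟩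
    rw [IsReduced, ← hexch, List.length_eraseIdx_of_lt hj, ← hω.eq]
    omega

theorem exists_isReduced_of_mem_closure {u : W} (hu : u ∈ Subgroup.closure (cs.simple '' K)) :
    ∃ ω : List B, (∀ i ∈ ω, i ∈ K) ∧ cs.IsReduced ω ∧ π ω = u := by
  induction hu using Subgroup.closure_induction_right with
  | one => exact ⟨[], by simp, by simp [IsReduced], cs.wordProd_nil⟩
  | mul_right u _ _ hs ih =>
    obtain ⟨i, hi, rfl⟩ := hs
    obtain ⟨ω, hωK, hω, rfl⟩ := ih
    exact exists_isReduced_wordProd_eq_mul_simple hωK hω hi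
  | mul_inv_cancel u _ _ hs ih =>
    obtain ⟨i, hi, rfl⟩ := hs
    obtain ⟨ω, hωK, hω, rfl⟩ := ih
    rw [inv_simple]
    exact exists_isReduced_wordProd_eq_mul_simple hωK hω hi

theorem length_mul_wordProd_of_isReduced {x : W}
    (hx : ∀ z ∈ Subgroup.closure (cs.simple '' K), ℓ x ≤ ℓ (x * z)) {ω : List B}
    (hωK : ∀ i ∈ ω, i ∈ K) (hω : cs.IsReduced ω) : ℓ (x * π ω) = ℓ x + ω.length := by
  induction ω using List.reverseRecOn with
  | nil => simp
  | append_singleton ω i ih =>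
    have hωK' : ∀ j ∈ ω, j ∈ K := fun j hj => hωK j (List.mem_append_left _ hj)
    have hiK : i ∈ K := hωK i (by simp)
    have hω' : cs.IsReduced ω := by simpa using hω.take ω.length
    have hωi : ℓ (π ω * s i) = ω.length + 1 := by
      simpa [IsReduced, wordProd_append] using hω.eq
    have hascent : ¬ cs.IsRightDescent (x * π ω) i := by
      intro hdesc
      obtain ⟨α, hα, rfl⟩ := cs.exists_isReduced x
      have hmem := cs.simple_mem_rightInvSeq_of_isRightDescent (ω := α ++ ω)
        (by rwa [wordProd_append])
      rw [rightInvSeq_append, List.mem_append, List.mem_map] at hmem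
      rcases hmem with ⟨t, ht, hts⟩ | hmem
      · -- then `t = π ω * s i * (π ω)⁻¹ ∈ W_K` would shorten `x = π α`
        have ht' : t = π ω * s i * (π ω)⁻¹ := by
          rw [← hts, MulAut.conj_apply]
          group
        have hlt := (cs.isRightInversion_of_mem_rightInvSeq hα ht).2
        have hle := hx t (ht' ▸ mul_mem (mul_mem (wordProd_mem_closure hωK')
          (Subgroup.subset_closure ⟨i, hiK, rfl⟩)) (inv_mem (wordProd_mem_closure hωK')))
        omega
      · have hlt := (cs.isRightInversion_of_mem_rightInvSeq hω' hmem).2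
        rw [hω'.eq] at hlt
        omega
    have := cs.length_mul_simple (x * π ω) i
    rw [IsRightDescent] at hascent
    rw [wordProd_append, wordProd_singleton, ← mul_assoc, List.length_append,
      List.length_singleton, ← add_assoc, ← ih hωK' hω']
    omega

theorem length_mul_of_mem_closure {x : W}
    (hx : ∀ z ∈ Subgroup.closure (cs.simple '' K), ℓ x ≤ ℓ (x * z)) {u : W}
    (hu : u ∈ Subgroup.closure (cs.simple '' K)) : ℓ (x * u) = ℓ x + ℓ u := by
  obtain ⟨ω, hωK, hω, rfl⟩ := exists_isReduced_of_mem_closure hu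
  rw [length_mul_wordProd_of_isReduced hx hωK hω, hω.eq]

theorem length_mul_of_mem_closure_left {x : W}
    (hx : ∀ y ∈ Subgroup.closure (cs.simple '' K), ℓ x ≤ ℓ (y * x)) {v : W}
    (hv : v ∈ Subgroup.closure (cs.simple '' K)) : ℓ (v * x) = ℓ v + ℓ x := by
  have hx' : ∀ z ∈ Subgroup.closure (cs.simple '' K), ℓ x⁻¹ ≤ ℓ (x⁻¹ * z) := fun z hz => by
    rw [cs.length_inv, ← cs.length_inv (x⁻¹ * z), mul_inv_rev, inv_inv]
    exact hx _ (inv_mem hz)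
  calc ℓ (v * x) = ℓ (x⁻¹ * v⁻¹) := by rw [← cs.length_inv, mul_inv_rev]
    _ = ℓ x⁻¹ + ℓ v⁻¹ := length_mul_of_mem_closure hx' (inv_mem hv)
    _ = ℓ v + ℓ x := by rw [cs.length_inv, cs.length_inv, add_comm]

theorem length_conj_of_mem_closure {J : Set B} {x : W}
    (hJ : ∀ y ∈ Subgroup.closure (cs.simple '' J), ℓ x ≤ ℓ (y * x))
    (hK : ∀ z ∈ Subgroup.closure (cs.simple '' K), ℓ x ≤ ℓ (x * z)) {w : W}
    (hwK : w ∈ Subgroup.closure (cs.simple '' K))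
    (hwJ : x * w * x⁻¹ ∈ Subgroup.closure (cs.simple '' J)) : ℓ (x * w * x⁻¹) = ℓ w := by
  have h := length_mul_of_mem_closure_left hJ hwJ
  rw [inv_mul_cancel_right, length_mul_of_mem_closure hK hwK] at h
  omega

end Parabolic

end CoxeterSystem

/-- Let `(W,S)` be a Coxeter system, `J, K ⊆ S`, and let `x` be a
minimal-length `(W_J, W_K)`-double coset representative. Then conjugation by
`x` restricts to a length-preserving group isomorphism
`⟨K ∩ x⁻¹Jx⟩ ≃* ⟨J ∩ xKx⁻¹⟩`. -/
theorem conj_minimal_double_coset_rep_length_preserving_iso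
    {B : Type*} {W : Type*} [Group W] {M : CoxeterMatrix B}
    (cs : CoxeterSystem M W) (J K : Set B) (x : W)
    (hmin : ∀ y ∈ Subgroup.closure (cs.simple '' J),
            ∀ z ∈ Subgroup.closure (cs.simple '' K),
      cs.length x ≤ cs.length (y * x * z)) :
    ∃ φ : Subgroup.closure
            {w : W | w ∈ cs.simple '' K ∧ x * w * x⁻¹ ∈ cs.simple '' J} ≃*
          Subgroup.closure
            {w : W | w ∈ cs.simple '' J ∧ x⁻¹ * w * x ∈ cs.simple '' K},
      (∀ w : Subgroup.closure
            {w : W | w ∈ cs.simple '' K ∧ x * w * x⁻¹ ∈ cs.simple '' J},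
        (φ w : W) = x * (w : W) * x⁻¹) ∧
      (∀ w ∈ Subgroup.closure
            {w : W | w ∈ cs.simple '' K ∧ x * w * x⁻¹ ∈ cs.simple '' J},
        cs.length (x * w * x⁻¹) = cs.length w) := by
  have hmap : (Subgroup.closure {w | w ∈ cs.simple '' K ∧ x * w * x⁻¹ ∈ cs.simple '' J}).map
      (MulAut.conj x).toMonoidHom =
        Subgroup.closure {w | w ∈ cs.simple '' J ∧ x⁻¹ * w * x ∈ cs.simple '' K} := by
    rw [MonoidHom.map_closure, MulEquiv.coe_toMonoidHom,
      MulAut.conj_image_setOf_mem_and_conj_mem]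
  let φ := (MulEquiv.subgroupMap (MulAut.conj x) _).trans (MulEquiv.subgroupCongr hmap)
  refine ⟨φ, fun w => rfl, fun w hw => ?_⟩
  have hJ : ∀ y ∈ Subgroup.closure (cs.simple '' J), cs.length x ≤ cs.length (y * x) :=
    fun y hy => by simpa using hmin y hy 1 (one_mem _)
  have hK : ∀ z ∈ Subgroup.closure (cs.simple '' K), cs.length x ≤ cs.length (x * z) :=
    fun z hz => by simpa using hmin 1 (one_mem _) z hz
  exact cs.length_conj_of_mem_closure hJ hK (Subgroup.closure_mono (fun _ h => h.1) hw)
    (Subgroup.closure_mono (fun _ h => h.1) (φ ⟨w, hw⟩).2)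
end
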